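/- arXiv:math-ph/9901001 — 4 statements merged into one kernel-verified Lean document; each statement's English description precedes it below -/
import Mathlib

section
/- If N is a positive integer and c, d are integers with gcd(2c, N) = 1, then the absolute value of the Gauss sum G(c,d;N) = \sum_{t mod N} e^{2\pi i (c t^2 + d t)/N} equals \sqrt{N}. -/
/-!
Expanding `|G|² = G · conj G` gives a double sum of `ψ (f x - f y)` with `f x = c x² + d x`.
Writing `x = y + u`, the difference `f (y + u) - f y = f u + 2 c u y` is linear in `y`, so the sum
over `y` is the orthogonality sum of the primitive character `ψ`: it equals `N` if `2 c u = 0`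
and vanishes otherwise. Since `2 c` is a unit, only `u = 0` survives, and `|G|² = N`.
-/

open Finset

namespace AddChar

variable {R : Type*} [CommRing R] [Fintype R] {ψ : AddChar R ℂ}

theorem sum_quadratic_mul_conj (hψ : ψ.IsPrimitive) {a : R} (ha : IsUnit (2 * a)) (b : R) :
    (∑ x, ψ (a * x ^ 2 + b * x)) * starRingEnd ℂ (∑ x, ψ (a * x ^ 2 + b * x)) =
      Fintype.card R := by
  classical
  have shift (y : R) : ∑ x, ψ (a * x ^ 2 + b * x) * starRingEnd ℂ (ψ (a * y ^ 2 + b * y)) =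
      ∑ u, ψ (a * u ^ 2 + b * u) * ψ (y * (2 * a * u)) := by
    refine (Fintype.sum_equiv (Equiv.addRight y) _ _ fun u => ?_).symm
    rw [Equiv.coe_addRight, ← map_neg_eq_conj, ← map_add_eq_mul, ← map_add_eq_mul]
    ring_nf
  have orthogonality (u : R) :
      ∑ y, ψ (y * (2 * a * u)) = if u = 0 then (Fintype.card R : ℂ) else 0 := by
    simp only [sum_mulShift _ hψ, ha.mul_right_eq_zero, Nat.cast_ite, Nat.cast_zero]
  calc (∑ x, ψ (a * x ^ 2 + b * x)) * starRingEnd ℂ (∑ x, ψ (a * x ^ 2 + b * x))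
      = ∑ y, ∑ u, ψ (a * u ^ 2 + b * u) * ψ (y * (2 * a * u)) := by
        rw [map_sum, sum_mul_sum, sum_comm]
        exact sum_congr rfl fun y _ => shift y
    _ = ∑ u, ψ (a * u ^ 2 + b * u) * if u = 0 then (Fintype.card R : ℂ) else 0 := by
        rw [sum_comm]
        simp only [← mul_sum, orthogonality]
    _ = Fintype.card R := by simp

theorem norm_sum_quadratic (hψ : ψ.IsPrimitive) {a : R} (ha : IsUnit (2 * a)) (b : R) :
    ‖∑ x, ψ (a * x ^ 2 + b * x)‖ = √(Fintype.card R) := by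
  have hsq := sum_quadratic_mul_conj hψ ha b
  rw [Complex.mul_conj] at hsq
  rw [Complex.norm_def, show Complex.normSq _ = (Fintype.card R : ℝ) by exact_mod_cast hsq]

end AddChar

theorem ZMod.sum_range_natCast {M : Type*} [AddCommMonoid M] (N : ℕ) [NeZero N]
    (f : ZMod N → M) : ∑ t ∈ range N, f t = ∑ x, f x :=
  sum_nbij' (↑) ZMod.val (fun _ _ => mem_univ _) (fun x _ => mem_range.mpr x.val_lt)
    (fun _ ht => ZMod.val_natCast_of_lt (mem_range.mp ht)) (fun x _ => ZMod.natCast_zmod_val x)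
    fun _ _ => rfl

/-- If `N` is a positive integer and `c, d` are integers with
`gcd(2c, N) = 1`, then `|G(c,d;N)| = √N`, where
`G(c,d;N) = ∑_{t mod N} exp(2πi (c t² + d t)/N)`. -/
theorem abs_gauss_sum_of_coprime (N : ℕ) (hN : 0 < N) (c d : ℤ)
    (h : Int.gcd (2 * c) (N : ℤ) = 1) :
    ‖∑ t ∈ Finset.range N,
      Complex.exp (2 * Real.pi * Complex.I *
        ((c : ℂ) * (t : ℂ) ^ 2 + (d : ℂ) * (t : ℂ)) / (N : ℂ))‖ =
    Real.sqrt N := by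
  have : NeZero N := ⟨hN.ne'⟩
  have hexp (t : ℕ) : Complex.exp (2 * Real.pi * Complex.I *
      ((c : ℂ) * (t : ℂ) ^ 2 + (d : ℂ) * (t : ℂ)) / (N : ℂ)) =
      ZMod.stdAddChar ((c : ZMod N) * (t : ZMod N) ^ 2 + (d : ZMod N) * (t : ZMod N)) := by
    have := ZMod.stdAddChar_coe (N := N) (c * t ^ 2 + d * t)
    push_cast at this
    exact this.symm
  have hunit : IsUnit (2 * (c : ZMod N)) := by
    rwa [show 2 * (c : ZMod N) = ((2 * c : ℤ) : ZMod N) by push_cast; rfl,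
      ZMod.coe_int_isUnit_iff_isCoprime, isCoprime_comm, Int.isCoprime_iff_gcd_eq_one]
  simp only [hexp]
  rw [ZMod.sum_range_natCast N fun x => ZMod.stdAddChar ((c : ZMod N) * x ^ 2 + (d : ZMod N) * x),
    AddChar.norm_sum_quadratic (ZMod.isPrimitive_stdAddChar N) hunit, ZMod.card]
end

section
/- Let N \ge 1, a \in Z, D = gcd(a,N), M = N/D, b = a/D. Define V_{a,N} on L^2(Z_N) by (V_{a,N}\psi)(P) = exp(-2\pi i (P-a)^2/N) \psi(P-a). For \eta \in {1,...,D} and l \in {0,...,M-1}, the function \psi_{\eta,l} given by \psi_{\eta,l}(P) = \sqrt{D} exp((2\pi i/N)(-\eta a \nu^2 - \nu l D + a^2 \nu ((M-1)(2M-1) - (\nu-1)(2\nu-1))/6)) when P \equiv \eta + \nu a mod N (for \nu \in {0,...,M-1}), and \psi_{\eta,l}(P) = 0 when P \not\equiv \eta mod D, satisfies V_{a,N} \psi_{\eta,l} = exp(2\pi i \phi_{\eta,l}/N) \psi_{\eta,l} with \phi_{\eta,l} = lD - \eta^2 + \eta a - a^2 (M-1)(2M-1)/6. -/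
/-- The eigenfunction `ψ_{η,l}` of `V_{a,N}`: it is supported on residues
`P ≡ η + ν a (mod N)`, `ν ∈ {0,…,M-1}` (equivalently `P ≡ η mod D`), where it takes
the value `√D e_N(-ηaν² - νlD + a²ν((M-1)(2M-1)-(ν-1)(2ν-1))/6)`, and vanishes
when `P ≢ η mod D`. -/
noncomputable def eigfun (N : ℕ) (a : ℤ) (D M η l : ℕ) : ZMod N → ℂ :=
  fun P => (Real.sqrt D : ℂ) * ∑ ν ∈ Finset.range M,
    if P = (η : ZMod N) + (ν : ZMod N) * (a : ZMod N) then
      Complex.exp (2 * Real.pi * Complex.I *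
        (-((η : ℂ) * (a : ℂ) * (ν : ℂ) ^ 2) - (ν : ℂ) * (l : ℂ) * (D : ℂ) +
          (a : ℂ) ^ 2 * (ν : ℂ) *
            (((M : ℂ) - 1) * (2 * (M : ℂ) - 1) - ((ν : ℂ) - 1) * (2 * (ν : ℂ) - 1)) / 6)
        / (N : ℂ))
    else 0

/-!
`V_{a,N}` maps the point `η + νa` of the orbit `η + aℤ/Nℤ` (of length `M`) to `η + (ν+1)a`.
Writing `ψ_{η,l}(η + νa) = √D e_N(f ν)`, the eigenvalue equation on the orbit reads
`f (ν+1) = f ν - (η + νa)² - φ_{η,l}`, which is a polynomial identity in `ν`; the phases were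
obtained by telescoping it. Closing the orbit requires `f M ≡ f 0 = 0 (mod N)`, and indeed
`f M = -(ηbM + l) N` since `N = MD` and `a = Db`.
-/

open Complex Finset
open scoped Real

theorem Finset.sum_range_comp_succ_mod {β : Type*} [AddCommMonoid β] (g : ℕ → β) (M : ℕ) :
    ∑ ν ∈ range M, g ((ν + 1) % M) = ∑ ν ∈ range M, g ν := by
  cases M with
  | zero => rfl
  | succ m =>
    rw [sum_range_succ, Nat.mod_self, sum_range_succ' g]
    congr 1
    exact sum_congr rfl fun ν hν => by rw [Nat.mod_eq_of_lt (by simpa using hν)]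

theorem Complex.exp_two_pi_I_mul_div_eq_of_modEq {N x y : ℂ} (h : x ≡ y [PMOD N]) :
    exp (2 * π * I * x / N) = exp (2 * π * I * y / N) := by
  obtain ⟨z, hz⟩ := AddCommGroup.modEq_iff_eq_add_zsmul.mp h
  rcases eq_or_ne N 0 with rfl | hN
  · simp
  rw [exp_eq_exp_iff_exists_int]
  refine ⟨-z, ?_⟩
  rw [hz, zsmul_eq_mul]
  field_simp
  push_cast
  ring

theorem ZMod.intCast_pow_modEq_of_intCast_eq {N : ℕ} {x y : ℤ} (h : (x : ZMod N) = y) (n : ℕ) :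
    (x : ℂ) ^ n ≡ (y : ℂ) ^ n [PMOD (N : ℂ)] := by
  have := ((ZMod.intCast_eq_intCast_iff x y N).mp h).pow n
  exact_mod_cast (AddCommGroup.modEq_iff_intModEq.mpr this).intCast (G := ℂ)

theorem ZMod.natCast_mod_mul_eq {N M : ℕ} {a : ZMod N} (hMa : (M : ZMod N) * a = 0) (n : ℕ) :
    ((n % M : ℕ) : ZMod N) * a = n * a := by
  conv_rhs => rw [← Nat.mod_add_div n M]
  push_cast
  linear_combination -((n / M : ℕ) : ZMod N) * hMa

noncomputable def eigfunPhase (a : ℤ) (D M η l : ℕ) (ν : ℂ) : ℂ :=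
  -((η : ℂ) * (a : ℂ) * ν ^ 2) - ν * (l : ℂ) * (D : ℂ) +
    (a : ℂ) ^ 2 * ν * (((M : ℂ) - 1) * (2 * (M : ℂ) - 1) - (ν - 1) * (2 * ν - 1)) / 6

noncomputable def eigenphase (a : ℤ) (D M η l : ℕ) : ℂ :=
  (l : ℂ) * (D : ℂ) - (η : ℂ) ^ 2 + (η : ℂ) * (a : ℂ) -
    (a : ℂ) ^ 2 * (((M : ℂ) - 1) * (2 * (M : ℂ) - 1)) / 6

theorem eigfun_eq (N : ℕ) (a : ℤ) (D M η l : ℕ) (P : ZMod N) :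
    eigfun N a D M η l P = (Real.sqrt D : ℂ) * ∑ ν ∈ range M,
      if P = η + ν * a then exp (2 * π * I * eigfunPhase a D M η l ν / N) else 0 :=
  rfl

theorem eigfunPhase_add_one (a : ℤ) (D M η l : ℕ) (ν : ℂ) :
    eigfunPhase a D M η l (ν + 1) =
      eigfunPhase a D M η l ν - ((η : ℂ) + ν * a) ^ 2 - eigenphase a D M η l := by
  unfold eigfunPhase eigenphase
  ring

theorem eigfunPhase_natCast_modEq_zero {N D M : ℕ} {a : ℤ} (hN : N = M * D) (ha : (D : ℤ) ∣ a)
    (η l : ℕ) : eigfunPhase a D M η l M ≡ 0 [PMOD (N : ℂ)] := by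
  obtain ⟨b, rfl⟩ := ha
  refine AddCommGroup.modEq_zero_iff_eq_zsmul.mpr ⟨-(η * b * M + l), ?_⟩
  subst hN
  rw [zsmul_eq_mul, eigfunPhase]
  push_cast
  ring

theorem eigfunPhase_succ_mod_modEq {N D M : ℕ} {a : ℤ} (hN : N = M * D) (ha : (D : ℤ) ∣ a)
    (η l : ℕ) {ν : ℕ} (hν : ν < M) :
    eigfunPhase a D M η l ((ν + 1) % M : ℕ) ≡
      eigfunPhase a D M η l (ν + 1 : ℕ) [PMOD (N : ℂ)] := by
  rcases Nat.lt_or_ge (ν + 1) M with hlt | hge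
  · rw [Nat.mod_eq_of_lt hlt]
  · obtain rfl : ν + 1 = M := by omega
    rw [Nat.mod_self]
    simpa [eigfunPhase] using (eigfunPhase_natCast_modEq_zero hN ha η l).symm

section Eigenfunction

variable {N D M : ℕ} {a : ℤ} [NeZero N]

theorem eigfun_summand_shift (hN : N = M * D) (ha : (D : ℤ) ∣ a) (η l : ℕ) {ν : ℕ} (hν : ν < M)
    (P : ZMod N) :
    exp (-(2 * π * I) * ((P.val : ℂ) - a) ^ 2 / N) *
        (if P - a = η + ν * a then exp (2 * π * I * eigfunPhase a D M η l ν / N) else 0) =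
      exp (2 * π * I * eigenphase a D M η l / N) *
        (if P = η + ((ν + 1) % M : ℕ) * a then
          exp (2 * π * I * eigfunPhase a D M η l ((ν + 1) % M : ℕ) / N) else 0) := by
  have hMa : (M : ZMod N) * a = 0 := by
    obtain ⟨b, rfl⟩ := ha
    rw [← mul_zero (b : ZMod N), ← ZMod.natCast_self N, hN]
    push_cast
    ring
  have hcond : P - a = η + ν * a ↔ P = η + ((ν + 1) % M : ℕ) * a := by
    rw [ZMod.natCast_mod_mul_eq hMa, sub_eq_iff_eq_add]
    push_cast
    constructor <;> intro h <;> linear_combination h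
  by_cases hP : P - a = η + ν * a
  · rw [if_pos hP, if_pos (hcond.mp hP), ← exp_add, ← exp_add]
    have hsq : ((P.val : ℂ) - a) ^ 2 ≡ ((η : ℂ) + ν * a) ^ 2 [PMOD (N : ℂ)] := by
      have := ZMod.intCast_pow_modEq_of_intCast_eq (N := N) (x := P.val - a) (y := η + ν * a)
        (by push_cast; rw [ZMod.natCast_zmod_val, hP]) 2
      exact_mod_cast this
    have hphase : -((P.val : ℂ) - a) ^ 2 + eigfunPhase a D M η l ν ≡
        eigenphase a D M η l + eigfunPhase a D M η l ((ν + 1) % M : ℕ) [PMOD (N : ℂ)] := calc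
      _ ≡ -((η : ℂ) + ν * a) ^ 2 + eigfunPhase a D M η l ν [PMOD (N : ℂ)] :=
          (AddCommGroup.neg_modEq_neg.mpr hsq).add_right _
      _ = eigenphase a D M η l + eigfunPhase a D M η l (ν + 1 : ℕ) := by
          rw [Nat.cast_succ, eigfunPhase_add_one]; ring
      _ ≡ _ [PMOD (N : ℂ)] := (eigfunPhase_succ_mod_modEq hN ha η l hν).symm.add_left _
    convert exp_two_pi_I_mul_div_eq_of_modEq hphase using 2 <;> ring
  · rw [if_neg hP, if_neg (mt hcond.mpr hP), mul_zero, mul_zero]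

theorem eigfun_is_eigenfunction_of_dvd (hN : N = M * D) (ha : (D : ℤ) ∣ a) (η l : ℕ) :
    (fun P : ZMod N =>
        exp (-(2 * π * I) * ((P.val : ℂ) - a) ^ 2 / N) * eigfun N a D M η l (P - a)) =
      fun P => exp (2 * π * I * eigenphase a D M η l / N) * eigfun N a D M η l P := by
  funext P
  simp only [eigfun_eq]
  rw [mul_left_comm, mul_left_comm (exp _)]
  congr 1
  rw [mul_sum, mul_sum]
  conv_rhs => rw [← sum_range_comp_succ_mod _ M]
  exact sum_congr rfl fun ν hν => eigfun_summand_shift hN ha η l (mem_range.mp hν) P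

end Eigenfunction

theorem eigfun_is_eigenfunction_general (N : ℕ) (hN : 0 < N) (a : ℤ)
    (D M : ℕ) (hD : D = Int.gcd a (N : ℤ)) (hM : M = N / D)
    (η : ℕ) (l : ℕ) :
    (fun P : ZMod N =>
        Complex.exp (-(2 * Real.pi * Complex.I) * ((P.val : ℂ) - (a : ℂ)) ^ 2 / (N : ℂ)) *
          eigfun N a D M η l (P - (a : ZMod N))) =
    fun P : ZMod N =>
      Complex.exp (2 * Real.pi * Complex.I *
          ((l : ℂ) * (D : ℂ) - (η : ℂ) ^ 2 + (η : ℂ) * (a : ℂ) -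
            (a : ℂ) ^ 2 * (((M : ℂ) - 1) * (2 * (M : ℂ) - 1)) / 6) / (N : ℂ)) *
        eigfun N a D M η l P := by
  have : NeZero N := ⟨hN.ne'⟩
  have hDN : D ∣ N := by exact_mod_cast hD ▸ Int.gcd_dvd_right a N
  have hDa : (D : ℤ) ∣ a := hD ▸ Int.gcd_dvd_left a N
  exact eigfun_is_eigenfunction_of_dvd (hM ▸ (Nat.div_mul_cancel hDN).symm) hDa η l

/-- `ψ_{η,l}` is an eigenfunction of
`(V_{a,N}ψ)(P) = e_N(-(P-a)²) ψ(P-a)` with eigenphase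
`φ_{η,l} = lD - η² + ηa - a²(M-1)(2M-1)/6`. -/
theorem eigfun_is_eigenfunction (N : ℕ) (hN : 0 < N) (a : ℤ)
    (D M : ℕ) (hD : D = Int.gcd a (N : ℤ)) (hM : M = N / D)
    (η : ℕ) (hη : η ∈ Finset.Icc 1 D) (l : ℕ) (hl : l < M) :
    (fun P : ZMod N =>
        Complex.exp (-(2 * Real.pi * Complex.I) * ((P.val : ℂ) - (a : ℂ)) ^ 2 / (N : ℂ)) *
          eigfun N a D M η l (P - (a : ZMod N))) =
    fun P : ZMod N =>
      Complex.exp (2 * Real.pi * Complex.I *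
          ((l : ℂ) * (D : ℂ) - (η : ℂ) ^ 2 + (η : ℂ) * (a : ℂ) -
            (a : ℂ) ^ 2 * (((M : ℂ) - 1) * (2 * (M : ℂ) - 1)) / 6) / (N : ℂ)) *
        eigfun N a D M η l P :=
  eigfun_is_eigenfunction_general N hN a D M hD hM η l
end

section
/- For D = gcd(a,N) and any residue \phi mod N, the number of \eta \in {1,...,D} with -\eta^2 \equiv \phi mod D is at most C \sqrt{D} \tau(D) for an absolute constant C, where \tau(D) is the number of divisors of D. Consequently the multiplicity of any eigenphase of V_{a,N} is O_\epsilon(D^{1/2+\epsilon}) for every \epsilon > 0. -/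
/-!
Fix one solution `η₀` of `η² ≡ -ψ (mod D)`. Every other solution has
`D ∣ (η - η₀)(η + η₀)`, so with `d = gcd(D, η + η₀)` it lies in one residue class modulo `d`
and one modulo `D / d`; in `[1, D]` this leaves at most `min(d, D / d) ≤ √D` choices, and
summing over `d ∣ D` gives `√D τ(D)`.
An eigenphase determines `l` once `η` is fixed (as `N = D M` and `l < M`), and since `D ∣ a`
its `η` solves such a congruence. Finally `τ(n) = ∏ (aₚ + 1)` and `aₚ + 1 ≤ (p ^ ε) ^ aₚ` as
soon as `p ^ ε ≥ 2`, while each of the finitely many smaller primes costs a bounded factor.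
-/

open Finset

theorem succ_le_pow_of_two_le {x : ℝ} (hx : 2 ≤ x) (a : ℕ) : (a : ℝ) + 1 ≤ x ^ a :=
  calc (a : ℝ) + 1 = 1 + a * 1 := by ring
    _ ≤ (1 + 1) ^ a := one_add_mul_le_pow (by norm_num) a
    _ ≤ x ^ a := by gcongr; linarith

theorem succ_le_div_sub_one_mul_pow {x : ℝ} (hx : 1 < x) (a : ℕ) :
    (a : ℝ) + 1 ≤ x / (x - 1) * x ^ a := by
  have bernoulli := one_add_mul_le_pow (a := x - 1) (by linarith) a
  rw [add_sub_cancel] at bernoulli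
  calc (a : ℝ) + 1 ≤ x / (x - 1) * (1 + a * (x - 1)) := by
        rw [div_mul_eq_mul_div, le_div_iff₀ (by linarith)]
        nlinarith [sq_nonneg (x - 1), (Nat.cast_nonneg a : (0 : ℝ) ≤ a)]
    _ ≤ x / (x - 1) * x ^ a := by gcongr

theorem exists_card_divisors_le_mul_rpow {ε : ℝ} (hε : 0 < ε) :
    ∃ C > 0, ∀ n : ℕ, (#n.divisors : ℝ) ≤ C * (n : ℝ) ^ ε := by
  have h2ε : 1 < (2 : ℝ) ^ ε := Real.one_lt_rpow (by norm_num) hε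
  set B : ℝ := 2 ^ ε / (2 ^ ε - 1)
  set K : ℕ := ⌈(2 : ℝ) ^ ε⁻¹⌉₊
  have hB : 1 ≤ B := by rw [le_div_iff₀ (by linarith)]; linarith
  refine ⟨B ^ K, by positivity, fun n => ?_⟩
  rcases eq_or_ne n 0 with rfl | hn
  · simp [Real.zero_rpow hε.ne']
  have hfactor : ∀ p ∈ n.primeFactors, (n.factorization p : ℝ) + 1 ≤
      (if p < K then B else 1) * ((p : ℝ) ^ ε) ^ n.factorization p := by
    intro p hp
    have hp : (2 : ℝ) ≤ p := by exact_mod_cast (Nat.prime_of_mem_primeFactors hp).two_le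
    split_ifs with hpK
    · calc _ ≤ B * ((2 : ℝ) ^ ε) ^ n.factorization p := succ_le_div_sub_one_mul_pow h2ε _
        _ ≤ _ := by gcongr
    · rw [one_mul]
      refine succ_le_pow_of_two_le ?_ _
      calc (2 : ℝ) = ((2 : ℝ) ^ ε⁻¹) ^ ε := by
            rw [← Real.rpow_mul (by norm_num), inv_mul_cancel₀ hε.ne', Real.rpow_one]
        _ ≤ (p : ℝ) ^ ε := by
            gcongr; exact (Nat.le_ceil _).trans (by exact_mod_cast not_lt.mp hpK)
  have hsmall : ∏ p ∈ n.primeFactors, (if p < K then B else 1) ≤ B ^ K := by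
    rw [prod_ite, prod_const, prod_const_one, mul_one]
    refine pow_le_pow_right₀ hB ((card_le_card fun p hp => ?_).trans (card_range K).le)
    exact mem_range.mpr (mem_filter.mp hp).2
  have hn' : (n : ℝ) ^ ε = ∏ p ∈ n.primeFactors, ((p : ℝ) ^ ε) ^ n.factorization p := by
    have : (n : ℝ) = ∏ p ∈ n.primeFactors, (p : ℝ) ^ n.factorization p := by
      exact_mod_cast Nat.prod_primeFactors_pow_factorization hn
    rw [this, ← Real.finsetProd_rpow _ _ fun _ _ => by positivity]
    exact prod_congr rfl fun p _ => (Real.rpow_pow_comm (by positivity) _ _).symm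
  calc (#n.divisors : ℝ) = ∏ p ∈ n.primeFactors, ((n.factorization p : ℝ) + 1) := by
        rw [Nat.card_divisors hn]; push_cast; rfl
    _ ≤ ∏ p ∈ n.primeFactors,
          (if p < K then B else 1) * ((p : ℝ) ^ ε) ^ n.factorization p :=
        prod_le_prod (fun _ _ => by positivity) hfactor
    _ ≤ B ^ K * (n : ℝ) ^ ε := by
        rw [prod_mul_distrib, hn']; gcongr

theorem card_le_of_subset_Icc_of_modEq {S : Finset ℕ} {m d : ℕ} (hS : S ⊆ Icc 1 (m * d))
    (hmod : ∀ x ∈ S, ∀ y ∈ S, x ≡ y [MOD m]) : #S ≤ d := by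
  calc #S ≤ #(range d) := card_le_card_of_injOn (fun x => (x - 1) / m) ?_ ?_
    _ = d := card_range d
  · intro x hx
    have := mem_Icc.mp (hS hx)
    simp only [coe_range, Set.mem_Iio]
    exact Nat.div_lt_of_lt_mul (by omega)
  · intro x hx y hy hxy
    have hx1 := (mem_Icc.mp (hS hx)).1
    have hy1 := (mem_Icc.mp (hS hy)).1
    have hmod' : (x - 1) % m = (y - 1) % m := Nat.ModEq.add_right_cancel' 1 <| by
      rw [Nat.sub_add_cancel hx1, Nat.sub_add_cancel hy1]; exact hmod x hx y hy
    have : x - 1 = y - 1 := by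
      rw [← Nat.div_add_mod (x - 1) m, ← Nat.div_add_mod (y - 1) m, hmod']
      exact congrArg (m * · + _) hxy
    omega

theorem card_filter_gcd_eq_le_sqrt {D d η₀ : ℕ} {ψ : ℤ} (hd : d ∈ D.divisors)
    (hη₀ : (D : ℤ) ∣ (η₀ : ℤ) ^ 2 + ψ) :
    (#{η ∈ Icc 1 D | (D : ℤ) ∣ ↑η ^ 2 + ψ ∧ Nat.gcd D (η + η₀) = d} : ℝ) ≤ √D := by
  obtain ⟨⟨m, rfl⟩, hD⟩ := Nat.mem_divisors.mp hd
  have hd0 : (d : ℤ) ≠ 0 := by exact_mod_cast left_ne_zero_of_mul hD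
  set F :=
    {η ∈ Icc 1 (d * m) | ((d * m : ℕ) : ℤ) ∣ ↑η ^ 2 + ψ ∧ Nat.gcd (d * m) (η + η₀) = d}
  have hF : F ⊆ Icc 1 (d * m) := filter_subset _ _
  have hmod_d : ∀ x ∈ F, ∀ y ∈ F, x ≡ y [MOD d] := by
    intro x hx y hy
    have hdvd : ∀ z ∈ F, z + η₀ ≡ 0 [MOD d] := fun z hz =>
      Nat.modEq_zero_iff_dvd.mpr ((mem_filter.mp hz).2.2 ▸ Nat.gcd_dvd_right _ _)
    exact Nat.ModEq.add_right_cancel' η₀ ((hdvd x hx).trans (hdvd y hy).symm)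
  have hmod_m : ∀ x ∈ F, η₀ ≡ x [MOD m] := by
    intro x hx
    obtain ⟨-, hx, hgcd⟩ := mem_filter.mp hx
    have hprod : ((d * m : ℕ) : ℤ) ∣ ((x : ℤ) - η₀) * (x + η₀) :=
      (dvd_sub hx hη₀).trans ⟨1, by ring⟩
    have := dvd_mul_gcd_of_dvd_mul hprod
    rw [← Int.coe_gcd, ← Nat.cast_add, Int.gcd_natCast_natCast, hgcd, Nat.cast_mul,
      mul_comm (d : ℤ)] at this
    exact Nat.modEq_iff_dvd.mpr ((mul_dvd_mul_iff_right hd0).mp this)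
  have hm : #F ≤ m := card_le_of_subset_Icc_of_modEq hF hmod_d
  have hd : #F ≤ d := card_le_of_subset_Icc_of_modEq (mul_comm d m ▸ hF)
    fun x hx y hy => (hmod_m x hx).symm.trans (hmod_m y hy)
  rw [Real.le_sqrt (by positivity) (by positivity), sq]
  exact_mod_cast Nat.mul_le_mul hd hm

theorem card_filter_dvd_sq_add_le (D : ℕ) (ψ : ℤ) :
    (#{η ∈ Icc 1 D | (D : ℤ) ∣ ↑η ^ 2 + ψ} : ℝ) ≤ √D * #D.divisors := by
  set S := {η ∈ Icc 1 D | (D : ℤ) ∣ ↑η ^ 2 + ψ}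
  rcases S.eq_empty_or_nonempty with hS | ⟨η₀, hη₀⟩
  · rw [hS, card_empty, Nat.cast_zero]; positivity
  obtain ⟨hη₀D, hη₀⟩ := mem_filter.mp hη₀
  have hD : D ≠ 0 := by have := mem_Icc.mp hη₀D; omega
  calc (#S : ℝ) = ∑ d ∈ D.divisors, (#{η ∈ S | Nat.gcd D (η + η₀) = d} : ℝ) := by
        rw [card_eq_sum_card_fiberwise fun η _ =>
          Nat.mem_divisors.mpr ⟨Nat.gcd_dvd_left _ _, hD⟩]
        push_cast; rfl
    _ ≤ ∑ d ∈ D.divisors, √D := sum_le_sum fun d hd => by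
        rw [filter_filter]; exact card_filter_gcd_eq_le_sqrt hd hη₀
    _ = √D * #D.divisors := by rw [sum_const, nsmul_eq_mul, mul_comm]

theorem ncard_eigenphases_le {a : ℤ} {D M : ℕ} (hDa : (D : ℤ) ∣ a) (c φ : ℝ) :
    ∃ ψ : ℤ, {p : ℕ × ℕ | p.1 ∈ Icc 1 D ∧ p.2 < M ∧
        ∃ k : ℤ, (p.2 : ℝ) * D - (p.1 : ℝ) ^ 2 + p.1 * a - c = φ + k * (D * M)}.ncard ≤
      #{η ∈ Icc 1 D | (D : ℤ) ∣ ↑η ^ 2 + ψ} := by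
  set T := {p : ℕ × ℕ | p.1 ∈ Icc 1 D ∧ p.2 < M ∧
    ∃ k : ℤ, (p.2 : ℝ) * D - (p.1 : ℝ) ^ 2 + p.1 * a - c = φ + k * (D * M)}
  rcases T.eq_empty_or_nonempty with hT | ⟨q, hq⟩
  · exact ⟨0, by simp [hT]⟩
  let phase : ℕ × ℕ → ℤ := fun p => p.2 * D - p.1 ^ 2 + p.1 * a
  have hphase : ∀ p ∈ T, (D : ℤ) * M ∣ phase p - phase q := by
    rintro p ⟨-, -, k, hk⟩
    obtain ⟨-, -, k', hk'⟩ := hq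
    refine ⟨k - k', ?_⟩
    have : (phase p : ℝ) - phase q = (D * M) * (k - k') := by
      simp only [phase]; push_cast; linarith
    exact_mod_cast this
  refine ⟨phase q, ?_⟩
  rw [← Set.ncard_coe_finset]
  refine Set.ncard_le_ncard_of_injOn Prod.fst (fun p hp => ?_) (fun p hp p' hp' h => ?_)
    (finite_toSet _)
  · refine mem_filter.mpr ⟨hp.1, ?_⟩
    have hroot : (p.1 : ℤ) ^ 2 + phase q = p.2 * D + p.1 * a - (phase p - phase q) := by
      simp only [phase]; ring
    rw [hroot]
    exact dvd_sub (dvd_add (dvd_mul_left _ _) (hDa.mul_left _))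
      ((dvd_mul_right _ _).trans (hphase p hp))
  · have hD : (D : ℤ) ≠ 0 := by have := mem_Icc.mp hp.1; omega
    have hdiff : phase p' - phase p = (p'.2 - p.2 : ℤ) * D := by simp only [phase, h]; ring
    have hM : (D : ℤ) * M ∣ (p'.2 - p.2 : ℤ) * D := by
      rw [← hdiff, ← sub_sub_sub_cancel_right _ _ (phase q)]
      exact dvd_sub (hphase p' hp') (hphase p hp)
    rw [mul_comm (D : ℤ)] at hM
    have hmod : p.2 ≡ p'.2 [MOD M] := Nat.modEq_iff_dvd.mpr ((mul_dvd_mul_iff_right hD).mp hM)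
    exact Prod.ext h (hmod.eq_of_lt_of_lt hp.2.1 hp'.2.1)

theorem ncard_eigenphases_le_sqrt_mul_card_divisors {a : ℤ} {D M : ℕ} (hDa : (D : ℤ) ∣ a)
    (c φ : ℝ) :
    ({p : ℕ × ℕ | p.1 ∈ Icc 1 D ∧ p.2 < M ∧
        ∃ k : ℤ, (p.2 : ℝ) * D - (p.1 : ℝ) ^ 2 + p.1 * a - c = φ + k * (D * M)}.ncard : ℝ) ≤
      √D * #D.divisors := by
  obtain ⟨ψ, hψ⟩ := ncard_eigenphases_le (M := M) hDa c φ
  exact (Nat.cast_le.mpr hψ).trans (card_filter_dvd_sq_add_le D ψ)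

/-- (i) For `D = gcd(a,N)`, the number of `η ∈ {1,…,D}` with
`-η² ≡ φ mod D` is at most `C √D τ(D)` for an absolute constant `C > 0`.
(ii) Consequently, the multiplicity of any eigenphase
`φ_{η,l} = lD - η² + ηa - a²(M-1)(2M-1)/6 (mod N)` of `V_{a,N}` is
`O_ε(D^{1/2+ε})` for every `ε > 0`. -/
theorem eigenphase_multiplicity_bound :
    (∃ C > (0 : ℝ), ∀ (a : ℤ) (N : ℕ), 0 < N → ∀ φ : ℤ,
      (({η : ℕ | η ∈ Finset.Icc 1 (Int.gcd a (N : ℤ)) ∧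
          ((Int.gcd a (N : ℤ) : ℤ)) ∣ ((η : ℤ) ^ 2 + φ)}.ncard : ℝ)) ≤
        C * Real.sqrt (Int.gcd a (N : ℤ)) * ((Int.gcd a (N : ℤ)).divisors.card : ℝ)) ∧
    (∀ ε > (0 : ℝ), ∃ Cε > (0 : ℝ), ∀ (a : ℤ) (N : ℕ), 0 < N → ∀ φ : ℝ,
      (({p : ℕ × ℕ |
          p.1 ∈ Finset.Icc 1 (Int.gcd a (N : ℤ)) ∧
          p.2 < N / Int.gcd a (N : ℤ) ∧
          ∃ k : ℤ,
            (p.2 : ℝ) * (Int.gcd a (N : ℤ) : ℝ) - (p.1 : ℝ) ^ 2 + (p.1 : ℝ) * (a : ℝ) -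
              (a : ℝ) ^ 2 * (((N / Int.gcd a (N : ℤ) : ℕ) : ℝ) - 1) *
                (2 * ((N / Int.gcd a (N : ℤ) : ℕ) : ℝ) - 1) / 6
            = φ + (k : ℝ) * (N : ℝ)}.ncard : ℝ)) ≤
        Cε * (Int.gcd a (N : ℤ) : ℝ) ^ ((1 : ℝ) / 2 + ε)) := by
  refine ⟨⟨1, one_pos, fun a N _ φ => ?_⟩, fun ε hε => ?_⟩
  · rw [one_mul, ← coe_filter, Set.ncard_coe_finset]
    exact card_filter_dvd_sq_add_le _ φ
  · obtain ⟨C, hC, hτ⟩ := exists_card_divisors_le_mul_rpow hε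
    refine ⟨C, hC, fun a N _ φ => ?_⟩
    set D := Int.gcd a N
    have hN : (N : ℝ) = D * (N / D : ℕ) := by
      exact_mod_cast (Nat.mul_div_cancel' (Int.natCast_dvd_natCast.mp (Int.gcd_dvd_right a N))).symm
    rw [hN]
    calc _ ≤ √D * #D.divisors :=
          ncard_eigenphases_le_sqrt_mul_card_divisors (Int.gcd_dvd_left a N) _ φ
      _ ≤ (D : ℝ) ^ (1 / 2 : ℝ) * (C * (D : ℝ) ^ ε) := by
        rw [Real.sqrt_eq_rpow]; gcongr; exact hτ D
      _ = C * (D : ℝ) ^ ((1 : ℝ) / 2 + ε) := by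
        rw [Real.rpow_add' (by positivity) (by positivity)]; ring
end

section
/- Given any positive increasing function F, there exists an irrational \alpha whose continued fraction convergents p_n/q_n include infinitely many with q_n odd and |\alpha - p_n/q_n| < 1/F(q_n), and with F(q_n) \le a_{n+1} q_n^2 where a_{n+1} is the (n+1)-st partial quotient. -/
/-!
The partial quotients are chosen adaptively, `a (n + 1) = max 1 ⌈F (q n)⌉`; this is possible because
`q n` only depends on `a 1, …, a n`. Then `F (q n) ≤ a (n + 1) ≤ a (n + 1) * q n ^ 2`, and the
classical estimate `|α - p n / q n| < 1 / (q n * q (n + 1)) ≤ 1 / (a (n + 1) * q n ^ 2)` gives the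
approximation property for every `n`. Since `p (n + 1) * q n - p n * q (n + 1) = (-1) ^ n`, two
consecutive `q n` are never both even. The limit `α` exists because the convergents are partial
sums of an alternating series with decreasing terms, and it is irrational because it is approximated
by rationals faster than any rational number can be.
-/

open Filter Topology Finset

theorem StrictAnti.exists_tendsto_alternating_series_mem_Ioo {f : ℕ → ℝ} (hf : StrictAnti f)
    (hf0 : Tendsto f atTop (𝓝 0)) :
    ∃ l, Tendsto (fun n ↦ ∑ i ∈ range n, (-1) ^ i * f i) atTop (𝓝 l) ∧ l ∈ Set.Ioo 0 (f 0) := by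
  obtain ⟨l, hl⟩ := hf.antitone.tendsto_alternating_series_of_tendsto_zero hf0
  have h_lower := hf.antitone.alternating_series_le_tendsto hl 1
  have h_upper := hf.antitone.tendsto_le_alternating_series hl 1
  norm_num [sum_range_succ] at h_lower h_upper
  exact ⟨l, hl, by linarith [hf one_pos], by linarith [hf (by norm_num : 1 < 2)]⟩

theorem exists_tendsto_of_sub_eq_neg_one_pow_mul {x f : ℕ → ℝ} (hf : StrictAnti f)
    (hf0 : Tendsto f atTop (𝓝 0)) (hx : ∀ n, x (n + 1) - x n = (-1) ^ n * f n) :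
    ∃ α, Tendsto x atTop (𝓝 α) ∧ ∀ n, (-1) ^ n * (α - x n) ∈ Set.Ioo 0 (f n) := by
  have telescope (n m : ℕ) :
      (-1) ^ n * (x (m + n) - x n) = ∑ i ∈ range m, (-1) ^ i * f (i + n) := by
    induction m with
    | zero => simp
    | succ m ih =>
      have hsq : ((-1 : ℝ) ^ n) * (-1) ^ n = 1 := by rw [← mul_pow]; norm_num
      rw [sum_range_succ, ← ih, add_right_comm]
      linear_combination (-1) ^ n * hx (m + n) + (-1) ^ m * f (m + n) * hsq
  have tail (n : ℕ) := StrictAnti.exists_tendsto_alternating_series_mem_Ioo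
    (f := fun i ↦ f (i + n)) (fun _ _ h ↦ hf (Nat.add_lt_add_right h n))
    (hf0.comp (tendsto_add_atTop_nat n))
  obtain ⟨l, hl, -⟩ := tail 0
  simp only [add_zero] at hl
  have hxα : Tendsto x atTop (𝓝 (x 0 + l)) := by
    refine (tendsto_const_nhds.add hl).congr fun m ↦ ?_
    have := telescope 0 m
    simp only [pow_zero, one_mul, add_zero] at this
    linarith
  refine ⟨x 0 + l, hxα, fun n ↦ ?_⟩
  obtain ⟨l', hl', hl'_mem⟩ := tail n
  have : Tendsto (fun m ↦ (-1) ^ n * (x (m + n) - x n)) atTop (𝓝 ((-1) ^ n * (x 0 + l - x n))) :=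
    (((tendsto_add_atTop_iff_nat n).2 hxα).sub_const _).const_mul _
  rw [tendsto_nhds_unique (this.congr (telescope n)) hl']
  simpa using hl'_mem

theorem irrational_of_forall_exists_abs_intCast_mul_sub_lt {α : ℝ}
    (h : ∀ ε > 0, ∃ p q : ℤ, 0 < |q * α - p| ∧ |q * α - p| < ε) : Irrational α := by
  rintro ⟨r, rfl⟩
  -- `q * r - p` is a nonzero multiple of `1 / r.den`
  have hden : (0 : ℝ) < r.den := by exact_mod_cast r.pos
  obtain ⟨p, q, hpos, hlt⟩ := h (1 / r.den) (by positivity)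
  have key : (q * r - p : ℝ) = ((q * r.num - p * r.den : ℤ) : ℝ) / r.den := by
    rw [Rat.cast_def]; push_cast; field_simp
  rw [key, abs_div, abs_of_pos hden] at hpos hlt
  have hne : q * r.num - p * r.den ≠ 0 := by rintro h; simp [h] at hpos
  have : (1 : ℝ) ≤ |((q * r.num - p * r.den : ℤ) : ℝ)| := by exact_mod_cast Int.one_le_abs hne
  exact absurd hlt (not_lt.2 (div_le_div_of_nonneg_right this hden.le))

/-- `convNum a n / convDen a n` is the `n`-th convergent `p n / q n` of `[a 0; a 1, a 2, …]`. -/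
def convNum (a : ℕ → ℤ) : ℕ → ℤ
  | 0 => a 0
  | 1 => a 1 * a 0 + 1
  | n + 2 => a (n + 2) * convNum a (n + 1) + convNum a n

def convDen (a : ℕ → ℤ) : ℕ → ℤ
  | 0 => 1
  | 1 => a 1
  | n + 2 => a (n + 2) * convDen a (n + 1) + convDen a n

theorem convNum_add_two (a : ℕ → ℤ) (n : ℕ) :
    convNum a (n + 2) = a (n + 2) * convNum a (n + 1) + convNum a n := rfl

theorem convDen_add_two (a : ℕ → ℤ) (n : ℕ) :
    convDen a (n + 2) = a (n + 2) * convDen a (n + 1) + convDen a n := rfl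

theorem convNum_convDen_determinant (a : ℕ → ℤ) (n : ℕ) :
    convNum a (n + 1) * convDen a n - convNum a n * convDen a (n + 1) = (-1) ^ n := by
  induction n with
  | zero => simp only [convNum, convDen]; ring
  | succ n ih =>
    rw [convNum_add_two, convDen_add_two, pow_succ]
    linear_combination -ih

theorem odd_convDen_or_odd_convDen_succ (a : ℕ → ℤ) (n : ℕ) :
    Odd (convDen a n) ∨ Odd (convDen a (n + 1)) := by
  by_contra! h
  simp only [Int.not_odd_iff_even] at h
  have h_even : Even ((-1 : ℤ) ^ n) :=
    convNum_convDen_determinant a n ▸ (h.1.mul_left _).sub (h.2.mul_left _)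
  exact Int.not_even_iff_odd.2 odd_neg_one.pow h_even

section Convergents

variable {a : ℕ → ℤ}

theorem convDen_pos (ha : ∀ n, 0 < a (n + 1)) : ∀ n, 0 < convDen a n
  | 0 => one_pos
  | 1 => ha 0
  | _ + 2 => add_pos (mul_pos (ha _) (convDen_pos ha _)) (convDen_pos ha _)

theorem natCast_le_convDen (ha : ∀ n, 0 < a (n + 1)) : ∀ n : ℕ, (n : ℤ) ≤ convDen a n
  | 0 => zero_le_one
  | 1 => ha 0
  | n + 2 => by
    have := natCast_le_convDen ha (n + 1)
    have := convDen_pos ha n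
    have := ha (n + 1)
    rw [convDen_add_two]
    push_cast at *
    nlinarith

theorem mul_convDen_le_convDen_succ (ha : ∀ n, 0 < a (n + 1)) (n : ℕ) :
    a (n + 1) * convDen a n ≤ convDen a (n + 1) := by
  cases n with
  | zero => simp [convDen]
  | succ n => rw [convDen_add_two]; linarith [convDen_pos ha n]

theorem convDen_mul_convDen_succ_lt (ha : ∀ n, 0 < a (n + 1)) (n : ℕ) :
    convDen a n * convDen a (n + 1) < convDen a (n + 1) * convDen a (n + 2) := by
  rw [mul_comm]
  refine mul_lt_mul_of_pos_left ?_ (convDen_pos ha _)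
  rw [convDen_add_two]
  nlinarith [convDen_pos ha (n + 1), ha (n + 1)]

theorem convergent_succ_sub (ha : ∀ n, 0 < a (n + 1)) (n : ℕ) :
    (convNum a (n + 1) : ℝ) / convDen a (n + 1) - convNum a n / convDen a n =
      (-1) ^ n * ((convDen a n * convDen a (n + 1) : ℤ) : ℝ)⁻¹ := by
  have h0 : (convDen a n : ℝ) ≠ 0 := by exact_mod_cast (convDen_pos ha n).ne'
  have h1 : (convDen a (n + 1) : ℝ) ≠ 0 := by exact_mod_cast (convDen_pos ha _).ne'
  have hdet : ((convNum a (n + 1) * convDen a n - convNum a n * convDen a (n + 1) : ℤ) : ℝ) =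
      (-1) ^ n := by exact_mod_cast convNum_convDen_determinant a n
  push_cast at hdet ⊢
  field_simp
  linear_combination hdet

theorem exists_tendsto_convergents (ha : ∀ n, 0 < a (n + 1)) :
    ∃ α, Tendsto (fun n ↦ (convNum a n : ℝ) / convDen a n) atTop (𝓝 α) ∧
      ∀ n, (-1) ^ n * (α - convNum a n / convDen a n) ∈
        Set.Ioo 0 ((convDen a n * convDen a (n + 1) : ℤ) : ℝ)⁻¹ := by
  have hpos (n : ℕ) : (0 : ℝ) < ((convDen a n * convDen a (n + 1) : ℤ) : ℝ) := by
    exact_mod_cast mul_pos (convDen_pos ha n) (convDen_pos ha (n + 1))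
  refine exists_tendsto_of_sub_eq_neg_one_pow_mul (strictAnti_nat_of_succ_lt fun n ↦ ?_) ?_
    (convergent_succ_sub ha)
  · exact inv_strictAnti₀ (hpos n) (by exact_mod_cast convDen_mul_convDen_succ_lt ha n)
  · refine tendsto_inv_atTop_zero.comp (tendsto_atTop_mono (fun n ↦ ?_) tendsto_natCast_atTop_atTop)
    have := natCast_le_convDen ha n
    have := convDen_pos ha (n + 1)
    exact_mod_cast (by nlinarith : (n : ℤ) ≤ convDen a n * convDen a (n + 1))

noncomputable def cfValue (a : ℕ → ℤ) : ℝ :=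
  limUnder atTop fun n ↦ (convNum a n : ℝ) / convDen a n

theorem tendsto_convergents_cfValue (ha : ∀ n, 0 < a (n + 1)) :
    Tendsto (fun n ↦ (convNum a n : ℝ) / convDen a n) atTop (𝓝 (cfValue a)) := by
  obtain ⟨α, hα, -⟩ := exists_tendsto_convergents ha
  rwa [cfValue, hα.limUnder_eq]

theorem neg_one_pow_mul_cfValue_sub_convergent_mem_Ioo (ha : ∀ n, 0 < a (n + 1)) (n : ℕ) :
    (-1) ^ n * (cfValue a - convNum a n / convDen a n) ∈
      Set.Ioo 0 ((convDen a n * convDen a (n + 1) : ℤ) : ℝ)⁻¹ := by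
  obtain ⟨α, hα, hbounds⟩ := exists_tendsto_convergents ha
  rw [cfValue, hα.limUnder_eq]
  exact hbounds n

theorem abs_cfValue_sub_convergent_lt (ha : ∀ n, 0 < a (n + 1)) (n : ℕ) :
    |cfValue a - convNum a n / convDen a n| < ((convDen a n * convDen a (n + 1) : ℤ) : ℝ)⁻¹ := by
  obtain ⟨h0, h1⟩ := neg_one_pow_mul_cfValue_sub_convergent_mem_Ioo ha n
  rcases neg_one_pow_eq_or ℝ n with h | h <;> rw [h] at h0 h1
  · rw [abs_of_pos (by linarith)]; linarith
  · rw [abs_of_neg (by linarith)]; linarith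

theorem abs_cfValue_sub_convergent_lt_one_div (ha : ∀ n, 0 < a (n + 1)) (n : ℕ) :
    |cfValue a - convNum a n / convDen a n| < 1 / (a (n + 1) * convDen a n ^ 2) := by
  refine (abs_cfValue_sub_convergent_lt ha n).trans_le ?_
  rw [one_div]
  refine inv_anti₀ (by have := ha n; have := convDen_pos ha n; positivity) ?_
  have := mul_convDen_le_convDen_succ ha n
  have := convDen_pos ha n
  exact_mod_cast (by nlinarith : a (n + 1) * convDen a n ^ 2 ≤ convDen a n * convDen a (n + 1))

theorem irrational_cfValue (ha : ∀ n, 0 < a (n + 1)) : Irrational (cfValue a) := by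
  refine irrational_of_forall_exists_abs_intCast_mul_sub_lt fun ε hε ↦ ?_
  obtain ⟨n, hn⟩ := exists_nat_gt ε⁻¹
  have hq : (0 : ℝ) < convDen a n := by exact_mod_cast convDen_pos ha n
  have hq' : (n : ℝ) < convDen a (n + 1) := by
    exact_mod_cast (natCast_le_convDen ha (n + 1)).trans_lt' (by omega)
  have hne : cfValue a - convNum a n / convDen a n ≠ 0 := fun h ↦ by
    simpa [h] using (neg_one_pow_mul_cfValue_sub_convergent_mem_Ioo ha n).1
  have hmul : (convDen a n : ℝ) * cfValue a - convNum a n =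
      convDen a n * (cfValue a - convNum a n / convDen a n) := by
    field_simp
  refine ⟨convNum a n, convDen a n, ?_, ?_⟩
  · rw [hmul, abs_mul]
    exact mul_pos (abs_pos.2 hq.ne') (abs_pos.2 hne)
  · rw [hmul, abs_mul, abs_of_pos hq]
    calc (convDen a n : ℝ) * |cfValue a - convNum a n / convDen a n|
        < convDen a n * ((convDen a n * convDen a (n + 1) : ℤ) : ℝ)⁻¹ :=
          mul_lt_mul_of_pos_left (abs_cfValue_sub_convergent_lt ha n) hq
      _ = (convDen a (n + 1) : ℝ)⁻¹ := by push_cast; field_simp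
      _ < ε := by
          rw [inv_lt_comm₀ ((inv_pos.2 hε).trans (hn.trans hq')) hε]
          exact hn.trans hq'

end Convergents

/-- The pairs `(q n, q (n + 1))` of denominators of convergents when every partial quotient
`a (n + 1)` is `g (q n)`. -/
def feedbackConvDens (g : ℤ → ℤ) : ℕ → ℤ × ℤ
  | 0 => (1, g 1)
  | n + 1 =>
    ((feedbackConvDens g n).2, g (feedbackConvDens g n).2 * (feedbackConvDens g n).2 +
      (feedbackConvDens g n).1)

theorem exists_eq_comp_convDen (g : ℤ → ℤ) : ∃ a : ℕ → ℤ, ∀ n, a (n + 1) = g (convDen a n) := by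
  let a : ℕ → ℤ
    | 0 => 0
    | n + 1 => g (feedbackConvDens g n).1
  have h : ∀ n, convDen a n = (feedbackConvDens g n).1 ∧
      convDen a (n + 1) = (feedbackConvDens g n).2 := by
    intro n
    induction n with
    | zero => exact ⟨rfl, rfl⟩
    | succ n ih =>
      refine ⟨ih.2, ?_⟩
      rw [convDen_add_two, ih.1, ih.2]
      rfl
  exact ⟨a, fun n ↦ by rw [(h n).1]⟩

theorem exists_irrational_good_approximants_general (F : ℝ → ℝ)
    (hFpos : ∀ x ∈ Set.Ioi (0 : ℝ), 0 < F x) :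
    ∃ (α : ℝ) (a p q : ℕ → ℤ),
      Irrational α ∧
      (∀ k, 1 ≤ k → 1 ≤ a k) ∧
      p 0 = a 0 ∧ q 0 = 1 ∧ p 1 = a 1 * a 0 + 1 ∧ q 1 = a 1 ∧
      (∀ k, 1 ≤ k → p (k + 1) = a (k + 1) * p k + p (k - 1)) ∧
      (∀ k, 1 ≤ k → q (k + 1) = a (k + 1) * q k + q (k - 1)) ∧
      Filter.Tendsto (fun n => (p n : ℝ) / (q n : ℝ)) Filter.atTop (nhds α) ∧
      ∀ n₀ : ℕ, ∃ n : ℕ, n₀ ≤ n ∧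
        Odd (q n) ∧
        |α - (p n : ℝ) / (q n : ℝ)| < 1 / F ((q n : ℝ)) ∧
        F ((q n : ℝ)) ≤ (a (n + 1) : ℝ) * (q n : ℝ) ^ 2 := by
  obtain ⟨a, ha_eq⟩ := exists_eq_comp_convDen fun m ↦ max 1 ⌈F m⌉
  have ha : ∀ n, 0 < a (n + 1) := fun n ↦ by rw [ha_eq]; exact lt_max_of_lt_left one_pos
  have hq (n : ℕ) : (1 : ℝ) ≤ convDen a n := by exact_mod_cast convDen_pos ha n
  have hF (n : ℕ) : F (convDen a n) ≤ a (n + 1) * (convDen a n : ℝ) ^ 2 := by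
    have : F (convDen a n) ≤ a (n + 1) := by
      rw [ha_eq]; push_cast; exact (Int.le_ceil _).trans (le_max_right _ _)
    exact this.trans (le_mul_of_one_le_right (by exact_mod_cast (ha n).le) (one_le_pow₀ (hq n)))
  refine ⟨cfValue a, a, convNum a, convDen a, irrational_cfValue ha, ?_, rfl, rfl, rfl, rfl,
    ?_, ?_, tendsto_convergents_cfValue ha, fun n₀ ↦ ?_⟩
  · rintro (_ | k) hk
    exacts [absurd hk (by omega), ha k]
  · rintro (_ | k) hk
    exacts [absurd hk (by omega), rfl]
  · rintro (_ | k) hk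
    exacts [absurd hk (by omega), rfl]
  obtain ⟨n, hn, hodd⟩ : ∃ n, n₀ ≤ n ∧ Odd (convDen a n) :=
    (odd_convDen_or_odd_convDen_succ a n₀).elim (⟨n₀, le_rfl, ·⟩) (⟨n₀ + 1, by omega, ·⟩)
  refine ⟨n, hn, hodd, ?_, hF n⟩
  exact (abs_cfValue_sub_convergent_lt_one_div ha n).trans_le
    (one_div_le_one_div_of_le (hFpos _ (zero_lt_one.trans_le (hq n))) (hF n))

/-- Given a positive increasing function `F`, there is an
irrational `α`, given by a continued fraction `[a₀; a₁, a₂, …]` with convergents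
`pₙ/qₙ` (defined by the standard recursion and converging to `α`), with
infinitely many `n` such that `qₙ` is odd, `|α - pₙ/qₙ| < 1/F(qₙ)` and
`F(qₙ) ≤ a_{n+1} qₙ²`. -/
theorem exists_irrational_good_approximants (F : ℝ → ℝ)
    (hFpos : ∀ x ∈ Set.Ioi (0 : ℝ), 0 < F x)
    (hFmono : StrictMonoOn F (Set.Ioi (0 : ℝ))) :
    ∃ (α : ℝ) (a p q : ℕ → ℤ),
      Irrational α ∧
      (∀ k, 1 ≤ k → 1 ≤ a k) ∧
      p 0 = a 0 ∧ q 0 = 1 ∧ p 1 = a 1 * a 0 + 1 ∧ q 1 = a 1 ∧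
      (∀ k, 1 ≤ k → p (k + 1) = a (k + 1) * p k + p (k - 1)) ∧
      (∀ k, 1 ≤ k → q (k + 1) = a (k + 1) * q k + q (k - 1)) ∧
      Filter.Tendsto (fun n => (p n : ℝ) / (q n : ℝ)) Filter.atTop (nhds α) ∧
      ∀ n₀ : ℕ, ∃ n : ℕ, n₀ ≤ n ∧
        Odd (q n) ∧
        |α - (p n : ℝ) / (q n : ℝ)| < 1 / F ((q n : ℝ)) ∧
        F ((q n : ℝ)) ≤ (a (n + 1) : ℝ) * (q n : ℝ) ^ 2 :=
  exists_irrational_good_approximants_general F hFpos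
end
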